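/- Two-point-shift energy identity: let ρ be a two-species distribution, fix two distinct indices ι_0, κ_0 ∈ {1,…,N} and shifts s^{(1)}, s^{(2)} ∈ ℝ with −ρ^{(i)}(x_{κ_0}) ≤ s^{(i)} ≤ ρ^{(i)}(x_{ι_0}) for i = 1,2, and let ρ̃ be the two-species distribution with ρ̃^{(i)}(x_{κ_0}) = ρ^{(i)}(x_{κ_0}) + s^{(i)}, ρ̃^{(i)}(x_{ι_0}) = ρ^{(i)}(x_{ι_0}) − s^{(i)}, and ρ̃^{(i)}(x_ι) = ρ^{(i)}(x_ι) for ι ∉ {ι_0,κ_0}. Define a_{ik} := (D^{(ik)}(x_{κ_0},x_{ι_0}) + D^{(ik)}(x_{ι_0},x_{κ_0}))/2 and b_i := (1/2) ∑_{k=1}^{2} ∑_{ι=1}^{N} ρ^{(k)}(x_ι) (D^{(ik)}(x_ι,x_{ι_0}) − D^{(ik)}(x_ι,x_{κ_0})). Then E(ρ̃) − E(ρ) = ∑_{i=1}^{2} 2 b_i s^{(i)} + ∑_{i,k=1}^{2} a_{ik} s^{(i)} s^{(k)}. -/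
import Mathlib


open Finset

/-- The nonlocal cross-interaction energy on a finite graph with vertices `x`,
vertex weights `μ`, kernels `K`, and two-species densities `ρ`. -/
noncomputable def energyGG {N d : ℕ} (x : Fin N → EuclideanSpace ℝ (Fin d)) (μ : Fin N → ℝ)
    (K : Fin 2 → Fin 2 → EuclideanSpace ℝ (Fin d) → EuclideanSpace ℝ (Fin d) → ℝ)
    (ρ : Fin 2 → Fin N → ℝ) : ℝ :=
  (1 / 2) * ∑ i : Fin 2, ∑ k : Fin 2, ∑ ι : Fin N, ∑ κ : Fin N,
    K i k (x ι) (x κ) * ρ i ι * ρ k κ * (μ ι * μ κ)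

/-- A two-species distribution: nonnegative densities with total mass one for each species. -/
def IsDistGG {N : ℕ} (μ : Fin N → ℝ) (ρ : Fin 2 → Fin N → ℝ) : Prop :=
  (∀ i ι, 0 ≤ ρ i ι) ∧ ∀ i, ∑ ι : Fin N, ρ i ι * μ ι = 1

noncomputable def eGG {N : ℕ} (ι₀ κ₀ ι : Fin N) : ℝ :=
  (if ι = κ₀ then 1 else 0) - (if ι = ι₀ then 1 else 0)

lemma eGG_sum {N : ℕ} (ι₀ κ₀ : Fin N) (g : Fin N → ℝ) :
    ∑ ι : Fin N, eGG ι₀ κ₀ ι * g ι = g κ₀ - g ι₀ := by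
  simp [eGG, sub_mul, Finset.sum_sub_distrib, ite_mul]

lemma doubleGG {N : ℕ} (ι₀ κ₀ : Fin N) (f : Fin N → Fin N → ℝ) (m n : Fin N → ℝ) (s t : ℝ) :
    ∑ ι : Fin N, ∑ κ : Fin N, f ι κ * (m ι + s * eGG ι₀ κ₀ ι) * (n κ + t * eGG ι₀ κ₀ κ)
      = (∑ ι : Fin N, ∑ κ : Fin N, f ι κ * m ι * n κ)
        + t * (∑ ι : Fin N, m ι * (f ι κ₀ - f ι ι₀))
        + s * ((∑ κ : Fin N, n κ * f κ₀ κ) - ∑ κ : Fin N, n κ * f ι₀ κ)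
        + s * t * (f κ₀ κ₀ - f κ₀ ι₀ - (f ι₀ κ₀ - f ι₀ ι₀)) := by
  have step1 : ∑ ι : Fin N, ∑ κ : Fin N, f ι κ * (m ι + s * eGG ι₀ κ₀ ι) * (n κ + t * eGG ι₀ κ₀ κ)
      = ∑ ι : Fin N, ((∑ κ : Fin N, f ι κ * m ι * n κ)
          + t * (m ι * ∑ κ : Fin N, eGG ι₀ κ₀ κ * f ι κ)
          + s * (eGG ι₀ κ₀ ι * ∑ κ : Fin N, n κ * f ι κ)
          + s * t * (eGG ι₀ κ₀ ι * ∑ κ : Fin N, eGG ι₀ κ₀ κ * f ι κ)) := by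
    refine Finset.sum_congr rfl fun ι _ => ?_
    simp only [Finset.mul_sum, ← Finset.sum_add_distrib]
    exact Finset.sum_congr rfl fun κ _ => by ring
  rw [step1]
  simp only [Finset.sum_add_distrib, ← Finset.mul_sum, eGG_sum]

/-- Two-point-shift energy identity: shifting, for each species `i`, an amount `s i` of
mass from vertex `ι₀` to vertex `κ₀` changes the energy by
`∑ᵢ 2 bᵢ s⁽ⁱ⁾ + ∑ᵢₖ aᵢₖ s⁽ⁱ⁾ s⁽ᵏ⁾`, with `aᵢₖ` and `bᵢ` built from the differences
`D^{(ik)}(x,y) = K^{(ik)}(x,x) − K^{(ik)}(x,y)`. -/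
theorem two_point_shift_energy_identity
    (N d : ℕ) (hN : 2 ≤ N) (hd : 1 ≤ d)
    (x : Fin N → EuclideanSpace ℝ (Fin d)) (hx : Function.Injective x)
    (μ : Fin N → ℝ) (hμ : ∀ ι, 0 < μ ι)
    (K : Fin 2 → Fin 2 → EuclideanSpace ℝ (Fin d) → EuclideanSpace ℝ (Fin d) → ℝ)
    (hKcont : ∀ i k, Continuous fun p : EuclideanSpace ℝ (Fin d) × EuclideanSpace ℝ (Fin d) =>
      K i k p.1 p.2)
    (hKsym : ∀ i k p q, K i k p q = K i k q p)
    (hK12 : ∀ p q, K 0 1 p q = K 1 0 p q)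
    (ρ : Fin 2 → Fin N → ℝ) (hρ : IsDistGG μ ρ)
    (ι₀ κ₀ : Fin N) (hι₀κ₀ : ι₀ ≠ κ₀)
    (s : Fin 2 → ℝ)
    (hs : ∀ i, -(ρ i κ₀ * μ κ₀) ≤ s i ∧ s i ≤ ρ i ι₀ * μ ι₀)
    (ρt : Fin 2 → Fin N → ℝ)
    (hρt : ∀ i ι, ρt i ι * μ ι =
      if ι = κ₀ then ρ i ι * μ ι + s i
      else if ι = ι₀ then ρ i ι * μ ι - s i
      else ρ i ι * μ ι) :
    energyGG x μ K ρt - energyGG x μ K ρ =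
      (∑ i : Fin 2,
        2 * ((1 / 2) * ∑ k : Fin 2, ∑ ι : Fin N, ρ k ι * μ ι *
          ((K i k (x ι) (x ι) - K i k (x ι) (x ι₀)) -
            (K i k (x ι) (x ι) - K i k (x ι) (x κ₀)))) * s i)
      + ∑ i : Fin 2, ∑ k : Fin 2,
          ((1 / 2) * ((K i k (x κ₀) (x κ₀) - K i k (x κ₀) (x ι₀)) +
            (K i k (x ι₀) (x ι₀) - K i k (x ι₀) (x κ₀)))) * s i * s k := by
  -- masses of the shifted distribution
  have hm : ∀ i ι, ρt i ι * μ ι = ρ i ι * μ ι + s i * eGG ι₀ κ₀ ι := by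
    intro i ι
    rw [hρt]
    by_cases h1 : ι = κ₀
    · have h2 : ι ≠ ι₀ := by rw [h1]; exact Ne.symm hι₀κ₀
      simp [eGG, h1, h2, Ne.symm hι₀κ₀]
    · by_cases h2 : ι = ι₀ <;> simp [eGG, h1, h2, hι₀κ₀] <;> ring
  have energy_eq : ∀ σ : Fin 2 → Fin N → ℝ, energyGG x μ K σ =
      (1 / 2) * ∑ i : Fin 2, ∑ k : Fin 2, ∑ ι : Fin N, ∑ κ : Fin N,
        K i k (x ι) (x κ) * (σ i ι * μ ι) * (σ k κ * μ κ) := by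
    intro σ
    unfold energyGG
    congr 1
    refine Finset.sum_congr rfl fun i _ => Finset.sum_congr rfl fun k _ =>
      Finset.sum_congr rfl fun ι _ => Finset.sum_congr rfl fun κ _ => by ring
  rw [energy_eq ρt, energy_eq ρ]
  simp only [hm]
  simp only [Fin.sum_univ_two]
  simp only [← hK12]
  have d00 := doubleGG ι₀ κ₀ (fun ι κ => K 0 0 (x ι) (x κ))
    (fun ι => ρ 0 ι * μ ι) (fun ι => ρ 0 ι * μ ι) (s 0) (s 0)
  have d01 := doubleGG ι₀ κ₀ (fun ι κ => K 0 1 (x ι) (x κ))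
    (fun ι => ρ 0 ι * μ ι) (fun ι => ρ 1 ι * μ ι) (s 0) (s 1)
  have d10 := doubleGG ι₀ κ₀ (fun ι κ => K 0 1 (x ι) (x κ))
    (fun ι => ρ 1 ι * μ ι) (fun ι => ρ 0 ι * μ ι) (s 1) (s 0)
  have d11 := doubleGG ι₀ κ₀ (fun ι κ => K 1 1 (x ι) (x κ))
    (fun ι => ρ 1 ι * μ ι) (fun ι => ρ 1 ι * μ ι) (s 1) (s 1)
  -- symmetrization helpers: swap the two arguments of K inside sums
  have hsym : ∀ (i k : Fin 2) (a : Fin N → ℝ),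
      (∑ κ : Fin N, a κ * K i k (x κ₀) (x κ)) - ∑ κ : Fin N, a κ * K i k (x ι₀) (x κ)
        = ∑ κ : Fin N, a κ * (K i k (x κ) (x κ₀) - K i k (x κ) (x ι₀)) := by
    intro i k a
    rw [← Finset.sum_sub_distrib]
    refine Finset.sum_congr rfl fun κ _ => ?_
    rw [hKsym i k (x κ₀) (x κ), hKsym i k (x ι₀) (x κ)]
    ring
  -- RHS bracket simplification
  have hb : ∀ (i k : Fin 2) (a : Fin N → ℝ),
      (∑ ι : Fin N, a ι *
        ((K i k (x ι) (x ι) - K i k (x ι) (x ι₀)) - (K i k (x ι) (x ι) - K i k (x ι) (x κ₀))))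
      = ∑ ι : Fin N, a ι * (K i k (x ι) (x κ₀) - K i k (x ι) (x ι₀)) := by
    intro i k a
    exact Finset.sum_congr rfl fun ι _ => by ring
  linear_combination (1/2) * d00 + (1/2) * d01 + (1/2) * d10 + (1/2) * d11
    + (s 0 / 2) * hsym 0 0 (fun ι => ρ 0 ι * μ ι)
    + (s 0 / 2) * hsym 0 1 (fun ι => ρ 1 ι * μ ι)
    + (s 1 / 2) * hsym 0 1 (fun ι => ρ 0 ι * μ ι)
    + (s 1 / 2) * hsym 1 1 (fun ι => ρ 1 ι * μ ι)
    - (s 0) * hb 0 0 (fun ι => ρ 0 ι * μ ι)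
    - (s 0) * hb 0 1 (fun ι => ρ 1 ι * μ ι)
    - (s 1) * hb 0 1 (fun ι => ρ 0 ι * μ ι)
    - (s 1) * hb 1 1 (fun ι => ρ 1 ι * μ ι)
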